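/- Farthest-point sampling guarantees a 2-approximation to the optimal k-center covering radius: in a finite metric space, if S_k is any set of k points chosen greedily (each new point maximizing the distance to the already-chosen set), then the covering radius of S_k is at most twice the minimal covering radius achievable by any k-point subset. -/

import Mathlib

/-!
Let `x₀` be a point realising the covering radius `r` of the greedy set `S_k`. Appending `x₀`
to the greedy sequence is one more farthest-point step. Along a farthest-point sequence the
distance of the newest point to its predecessors never increases, so any two of the first
`n + 1` points are at least as far apart as the last one is from the others; hence
`s 0, …, s (k-1), x₀` are pairwise at distance `≥ r`. Two of these `k + 1` points share a
nearest point of any `k`-set `T`, and the triangle inequality through it gives `r ≤ 2 · covRad T`.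
-/

open Finset

/-- Distance from a point to a finite set of points (0 if the set is empty). -/
noncomputable def dSet {X : Type*} [MetricSpace X] (x : X) (S : Finset X) : ℝ :=
  sInf ((fun p => dist x p) '' (S : Set X))

/-- Covering radius of a finite set in a finite metric space. -/
noncomputable def covRad {X : Type*} [MetricSpace X] [Fintype X] (S : Finset X) : ℝ :=
  sSup (Set.range fun x : X => dSet x S)

open Function

lemma Finset.image_update_of_notMem {α β : Type*} [DecidableEq α] [DecidableEq β] (f : α → β)
    {t : Finset α} {a : α} (b : β) (ha : a ∉ t) : t.image (update f a b) = t.image f :=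
  image_congr fun _ hi => update_of_ne (ne_of_mem_of_not_mem hi ha) b f

section DistanceToSet

variable {X : Type*} [MetricSpace X]

lemma dSet_le_dist (x : X) {S : Finset X} {p : X} (hp : p ∈ S) : dSet x S ≤ dist x p :=
  csInf_le ⟨0, by rintro _ ⟨q, -, rfl⟩; exact dist_nonneg⟩ ⟨p, hp, rfl⟩

lemma exists_mem_dSet_eq_dist (x : X) {S : Finset X} (hS : S.Nonempty) :
    ∃ p ∈ S, dSet x S = dist x p := by
  obtain ⟨p, hp, h⟩ := ((coe_nonempty.mpr hS).image fun p => dist x p).csInf_mem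
    (S.finite_toSet.image _)
  exact ⟨p, hp, h.symm⟩

lemma dSet_anti (x : X) {S S' : Finset X} (hS : S.Nonempty) (h : S ⊆ S') :
    dSet x S' ≤ dSet x S := by
  obtain ⟨p, hp, hdist⟩ := exists_mem_dSet_eq_dist x hS
  exact hdist ▸ dSet_le_dist x (h hp)

section CoveringRadius

variable [Fintype X]

lemma dSet_le_covRad (x : X) (S : Finset X) : dSet x S ≤ covRad S :=
  le_csSup (Set.finite_range _).bddAbove ⟨x, rfl⟩

lemma exists_covRad_eq_dSet [Nonempty X] (S : Finset X) : ∃ x, covRad S = dSet x S := by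
  obtain ⟨x, hx⟩ := (Set.range_nonempty _).csSup_mem (Set.finite_range fun x : X => dSet x S)
  exact ⟨x, hx.symm⟩

lemma exists_mem_dist_le_covRad (x : X) {T : Finset X} (hT : T.Nonempty) :
    ∃ t ∈ T, dist x t ≤ covRad T := by
  obtain ⟨t, ht, h⟩ := exists_mem_dSet_eq_dist x hT
  exact ⟨t, ht, h ▸ dSet_le_covRad x T⟩

/-- Pigeonhole: two of the points share a nearest point of `T`. -/
lemma le_two_mul_covRad_of_separated {ι : Type*} {I : Finset ι} {p : ι → X} {r : ℝ}
    {T : Finset X} (hT : T.Nonempty) (hcard : #T < #I)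
    (hsep : ∀ i ∈ I, ∀ j ∈ I, i ≠ j → r ≤ dist (p i) (p j)) : r ≤ 2 * covRad T := by
  choose f hfT hf using fun i => exists_mem_dist_le_covRad (p i) hT
  obtain ⟨i, hi, j, hj, hij, hfij⟩ :=
    exists_ne_map_eq_of_card_lt_of_maps_to hcard fun i _ => hfT i
  calc r ≤ dist (p i) (p j) := hsep i hi j hj hij
    _ ≤ dist (p i) (f i) + dist (p j) (f j) := hfij ▸ dist_triangle_right _ _ _
    _ ≤ covRad T + covRad T := add_le_add (hf i) (hf j)
    _ = 2 * covRad T := by ring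

end CoveringRadius

section FarthestPoint

variable [DecidableEq X]

def IsFarthestPointSeq (s : ℕ → X) (n : ℕ) : Prop :=
  ∀ m, 1 ≤ m → m < n → ∀ x : X, dSet x ((range m).image s) ≤ dSet (s m) ((range m).image s)

namespace IsFarthestPointSeq

variable {s : ℕ → X} {n : ℕ}

lemma update (hs : IsFarthestPointSeq s n) {x₀ : X}
    (hx₀ : ∀ x, dSet x ((range n).image s) ≤ dSet x₀ ((range n).image s)) :
    IsFarthestPointSeq (update s n x₀) (n + 1) := by
  intro m hm hmn x
  rw [image_update_of_notMem s x₀ (by rw [mem_range]; omega)]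
  rcases (Nat.lt_succ_iff.mp hmn).lt_or_eq with hlt | rfl
  · rw [update_of_ne hlt.ne]
    exact hs m hm hlt x
  · rw [update_self]
    exact hx₀ x

lemma dSet_le_dist_of_lt (hs : IsFarthestPointSeq s (n + 1)) {i j : ℕ} (hij : i < j)
    (hjn : j ≤ n) : dSet (s n) ((range n).image s) ≤ dist (s i) (s j) :=
  calc dSet (s n) ((range n).image s)
      ≤ dSet (s n) ((range j).image s) :=
        dSet_anti _ ((nonempty_range_iff.mpr (by omega)).image s)
          (image_subset_image (range_subset_range.mpr hjn))
    _ ≤ dSet (s j) ((range j).image s) := hs j (by omega) (by omega) _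
    _ ≤ dist (s j) (s i) := dSet_le_dist _ (mem_image_of_mem s (mem_range.mpr hij))
    _ = dist (s i) (s j) := dist_comm _ _

lemma dSet_le_dist_of_ne (hs : IsFarthestPointSeq s (n + 1)) {i j : ℕ} (hij : i ≠ j)
    (hin : i ≤ n) (hjn : j ≤ n) : dSet (s n) ((range n).image s) ≤ dist (s i) (s j) := by
  rcases hij.lt_or_gt with h | h
  · exact hs.dSet_le_dist_of_lt h hjn
  · exact dist_comm (s i) (s j) ▸ hs.dSet_le_dist_of_lt h hin

end IsFarthestPointSeq

end FarthestPoint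

end DistanceToSet

theorem fps_two_approximation_general {X : Type*} [MetricSpace X] [Fintype X] [Nonempty X] [DecidableEq X]
    (k : ℕ) (hk : 1 ≤ k) (s : ℕ → X)
    (greedy : ∀ m, 1 ≤ m → m < k → ∀ x : X,
      dSet x ((Finset.range m).image s) ≤ dSet (s m) ((Finset.range m).image s)) :
    ∀ T : Finset X, T.card = k →
      covRad ((Finset.range k).image s) ≤ 2 * covRad T := by
  intro T hT
  obtain ⟨x₀, hx₀⟩ := exists_covRad_eq_dSet ((range k).image s)
  have hext : IsFarthestPointSeq (update s k x₀) (k + 1) :=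
    IsFarthestPointSeq.update greedy fun x => hx₀ ▸ dSet_le_covRad x _
  refine le_two_mul_covRad_of_separated (I := range (k + 1)) (p := update s k x₀)
    (card_pos.mp (by omega)) (by simp [hT]) fun i hi j hj hij => ?_
  have hsep := hext.dSet_le_dist_of_ne hij (mem_range_succ_iff.mp hi) (mem_range_succ_iff.mp hj)
  rwa [update_self, image_update_of_notMem s x₀ notMem_range_self, ← hx₀] at hsep

/-- Farthest-point sampling is a 2-approximation for the k-center problem:
if `s` is chosen greedily (each `s m`, for `1 ≤ m < k`, maximizes the distance to
the already-chosen points `s 0, …, s (m-1)`), then the covering radius of the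
first `k` greedy points is at most twice the covering radius of any `k`-point subset. -/
theorem fps_two_approximation {X : Type*} [MetricSpace X] [Fintype X] [Nonempty X] [DecidableEq X]
    (k : ℕ) (hk : 1 ≤ k) (hcard : k ≤ Fintype.card X) (s : ℕ → X)
    (greedy : ∀ m, 1 ≤ m → m < k → ∀ x : X,
      dSet x ((Finset.range m).image s) ≤ dSet (s m) ((Finset.range m).image s)) :
    ∀ T : Finset X, T.card = k →
      covRad ((Finset.range k).image s) ≤ 2 * covRad T :=
  fps_two_approximation_general k hk s greedy
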